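/- arXiv:2311.15229 — 3 statements merged into one kernel-verified Lean document; each statement's English description precedes it below -/
import Mathlib

section
/- The content function is injective on charged partitions: if |λ,s⟩ and |λ′,s′⟩ are charged partitions such that O_{|λ,s⟩}(u) = O_{|λ′,s′⟩}(u) as elements of the field of rational functions ℚ(u), then λ = λ′ and s = s′. -/
/-!
The content function is injective on charged partitions.

A partition is encoded by its Young diagram (Mathlib's `YoungDiagram`, a finite lower set
of boxes in `ℕ × ℕ`).  A box `c` is *addable* for `μ` if it is not a cell of `μ` and adding
it again yields the Young diagram of a partition (i.e. a lower set); it is *removable* if it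
is a cell of `μ` and deleting it yields the Young diagram of a partition.  For `s : ℤ` the
`s`-shifted content of a box `c = (i, j)` is `s + j - i`.  The content function of the
charged partition `|μ, s⟩` is
`O_{|μ,s⟩}(u) = (∏_{b addable} (u - cont^s b)) / (∏_{b removable} (u - cont^s b)) ∈ ℚ(u)`.
-/

open scoped Classical

noncomputable section

/-- A box `c` is addable for the Young diagram `μ`. -/
def IsAddable (μ : YoungDiagram) (c : ℕ × ℕ) : Prop :=
  c ∉ μ ∧ IsLowerSet (insert c (μ.cells : Set (ℕ × ℕ)))

/-- A box `c` is removable for the Young diagram `μ`. -/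
def IsRemovable (μ : YoungDiagram) (c : ℕ × ℕ) : Prop :=
  c ∈ μ ∧ IsLowerSet ((μ.cells : Set (ℕ × ℕ)) \ {c})

/-- The `s`-shifted content of a box `c = (i, j)` is `s + j - i`. -/
def cont (s : ℤ) (c : ℕ × ℕ) : ℤ := s + (c.2 : ℤ) - (c.1 : ℤ)

/-- The content function of the charged partition `|μ, s⟩`, as an element of `ℚ(u)`. -/
def contentFun (μ : YoungDiagram) (s : ℤ) : RatFunc ℚ :=
  (∏ᶠ c ∈ {c | IsAddable μ c}, (RatFunc.X - RatFunc.C ((cont s c : ℤ) : ℚ))) /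
    (∏ᶠ c ∈ {c | IsRemovable μ c}, (RatFunc.X - RatFunc.C ((cont s c : ℤ) : ℚ)))

/-!
Row `i` of `|μ, s⟩` has beta-number `βᵢ = s + μᵢ - i`, the content of the box just right of
it, and `(βᵢ)` is strictly decreasing. In terms of the Maya diagram `B = {βᵢ}`, the addable
contents are the `x ∈ B` with `x + 1 ∉ B` and the removable contents the `x ∉ B` with
`x + 1 ∈ B`; these are the zeros and the poles of the content function, which are read off
because numerator and denominator are coprime products of distinct linear factors. Since `B`
is bounded above, knowing where it starts and stops determines it from the top down, and `B`
determines `(βᵢ)`, hence `μ` and `s` (as `βᵢ = s - i` for large `i`).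
-/

theorem isLowerSet_insert_iff {α : Type*} [PartialOrder α] {s : Set α} {a : α}
    (hs : IsLowerSet s) : IsLowerSet (insert a s) ↔ ∀ b < a, b ∈ s := by
  refine ⟨fun h b hb => ?_, fun h b c hcb hb => ?_⟩
  · exact (h hb.le (Set.mem_insert a s)).resolve_left hb.ne
  · rcases hb with rfl | hb
    · rcases hcb.lt_or_eq with hlt | rfl
      · exact Or.inr (h c hlt)
      · exact Set.mem_insert c s
    · exact Or.inr (hs hcb hb)

theorem isLowerSet_diff_singleton_iff {α : Type*} [PartialOrder α] {s : Set α} {a : α}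
    (hs : IsLowerSet s) : IsLowerSet (s \ {a}) ↔ ∀ b ∈ s, ¬a < b := by
  refine ⟨fun h b hb hab => (h hab.le ⟨hb, hab.ne'⟩).2 rfl, fun h b c hcb hb => ?_⟩
  refine ⟨hs hcb hb.1, fun hca => h b hb.1 ?_⟩
  rw [Set.mem_singleton_iff] at hca
  exact lt_of_le_of_ne (hca ▸ hcb) (Ne.symm (hca ▸ hb.2))

theorem StrictAnti.add_one_mem_range_iff {f : ℕ → ℤ} (hf : StrictAnti f) {i : ℕ} :
    f i + 1 ∈ Set.range f ↔ ∃ k, i = k + 1 ∧ f k = f i + 1 := by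
  refine ⟨fun ⟨k, hk⟩ => ?_, fun ⟨k, _, hk⟩ => ⟨k, hk⟩⟩
  have hki : k < i := hf.lt_iff_gt.mp (by omega)
  obtain ⟨m, rfl⟩ : ∃ m, i = m + 1 := ⟨i - 1, by omega⟩
  have := hf.antitone (by omega : k ≤ m)
  have := hf (by omega : m < m + 1)
  exact ⟨m, rfl, by omega⟩

theorem StrictAnti.sub_one_mem_range_iff {f : ℕ → ℤ} (hf : StrictAnti f) {i : ℕ} :
    f i - 1 ∈ Set.range f ↔ f (i + 1) = f i - 1 := by
  refine ⟨fun ⟨k, hk⟩ => ?_, fun h => ⟨i + 1, h⟩⟩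
  have hik : i < k := hf.lt_iff_gt.mp (by omega)
  have := hf.antitone (by omega : i + 1 ≤ k)
  have := hf (by omega : i < i + 1)
  omega

theorem Int.eq_of_bddAbove_of_boundary_eq {B C : Set ℤ} (hB : BddAbove B) (hC : BddAbove C)
    (hstart : {x | x ∈ B ∧ x + 1 ∉ B} = {x | x ∈ C ∧ x + 1 ∉ C})
    (hstop : {x | x ∉ B ∧ x + 1 ∈ B} = {x | x ∉ C ∧ x + 1 ∈ C}) : B = C := by
  obtain ⟨M, hM⟩ := hB.union hC
  have hstep (x : ℤ) (hx : x + 1 ∈ B ↔ x + 1 ∈ C) : x ∈ B ↔ x ∈ C := by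
    have h₁ := Set.ext_iff.mp hstart x
    have h₂ := Set.ext_iff.mp hstop x
    simp only [Set.mem_ofPred_eq] at h₁ h₂
    tauto
  have habove (x : ℤ) (hx : M < x) : x ∉ B ∧ x ∉ C :=
    ⟨fun h => hx.not_ge (hM (Or.inl h)), fun h => hx.not_ge (hM (Or.inr h))⟩
  have hbelow : ∀ x ≤ M + 1, (x ∈ B ↔ x ∈ C) := by
    refine Int.leInductionDown ?_ fun x _ ih => hstep _ (by rwa [sub_add_cancel])
    have := habove (M + 1) (by omega)
    tauto
  ext x
  by_cases hx : x ≤ M + 1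
  · exact hbelow x hx
  · have := habove x (by omega)
    tauto

open Polynomial

theorem Polynomial.Monic.eq_of_mul_eq_mul_of_isCoprime {R : Type*} [CommRing R] [IsDomain R]
    {p q p' q' : R[X]} (hp : p.Monic) (hp' : p'.Monic) (hpq : IsCoprime p q)
    (hpq' : IsCoprime p' q') (h : p * q' = p' * q) : p = p' ∧ q = q' := by
  have hdvd : p ∣ p' := hpq.dvd_of_dvd_mul_right ⟨q', h.symm⟩
  have hdvd' : p' ∣ p := hpq'.dvd_of_dvd_mul_right ⟨q, h⟩
  have hpp' : p = p' := eq_of_monic_of_associated hp hp' (associated_of_dvd_dvd hdvd hdvd')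
  subst hpp'
  exact ⟨rfl, (mul_left_cancel₀ hp.ne_zero h).symm⟩

section LinearFactors

variable {ι K : Type*} [Field K]

theorem Polynomial.roots_prod_X_sub_C_comp (φ : ι → K) (A : Finset ι) :
    (∏ i ∈ A, (X - C (φ i))).roots = A.val.map φ := by
  rw [Finset.prod_eq_multiset_prod, ← roots_multiset_prod_X_sub_C (A.val.map φ), Multiset.map_map]
  rfl

theorem Polynomial.isCoprime_prod_X_sub_C_comp {φ : ι → K} (hφ : Function.Injective φ)
    {A R : Finset ι} (hAR : Disjoint A R) :
    IsCoprime (∏ i ∈ A, (X - C (φ i))) (∏ i ∈ R, (X - C (φ i))) :=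
  IsCoprime.prod_left fun a ha => IsCoprime.prod_right fun r hr =>
    isCoprime_X_sub_C_of_isUnit_sub <| (sub_ne_zero.mpr <| hφ.ne <|
      fun h => Finset.disjoint_left.mp hAR ha (by rwa [h])).isUnit

theorem RatFunc.finprod_mem_X_sub_C (φ : ι → K) {A : Set ι} (hA : A.Finite) :
    ∏ᶠ i ∈ A, (RatFunc.X - RatFunc.C (φ i)) =
      algebraMap K[X] (RatFunc K) (∏ i ∈ hA.toFinset, (Polynomial.X - Polynomial.C (φ i))) := by
  rw [finprod_mem_eq_finite_toFinset_prod _ hA, map_prod]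
  simp only [map_sub, RatFunc.algebraMap_X, RatFunc.algebraMap_C]

theorem RatFunc.eq_of_finprod_div_finprod_eq {φ : ι → K} (hφ : Function.Injective φ)
    {A R A' R' : Set ι} (hA : A.Finite) (hR : R.Finite) (hA' : A'.Finite) (hR' : R'.Finite)
    (hAR : Disjoint A R) (hAR' : Disjoint A' R')
    (h : (∏ᶠ i ∈ A, (RatFunc.X - RatFunc.C (φ i))) / ∏ᶠ i ∈ R, (RatFunc.X - RatFunc.C (φ i)) =
      (∏ᶠ i ∈ A', (RatFunc.X - RatFunc.C (φ i))) / ∏ᶠ i ∈ R', (RatFunc.X - RatFunc.C (φ i))) :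
    A = A' ∧ R = R' := by
  set P : Finset ι → K[X] := fun S => ∏ i ∈ S, (Polynomial.X - Polynomial.C (φ i))
  have hmonic (S : Finset ι) : (P S).Monic := monic_prod_of_monic _ _ fun i _ => monic_X_sub_C (φ i)
  have hcoprime {S T : Set ι} (hS : S.Finite) (hT : T.Finite) (hST : Disjoint S T) :
      IsCoprime (P hS.toFinset) (P hT.toFinset) :=
    isCoprime_prod_X_sub_C_comp hφ (by rwa [Set.Finite.disjoint_toFinset])
  have hP : Function.Injective P := fun S T hST => by
    have := congrArg Polynomial.roots hST
    simp only [P, roots_prod_X_sub_C_comp] at this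
    exact Finset.val_inj.mp (Multiset.map_injective hφ this)
  simp only [RatFunc.finprod_mem_X_sub_C φ hA, RatFunc.finprod_mem_X_sub_C φ hR,
    RatFunc.finprod_mem_X_sub_C φ hA', RatFunc.finprod_mem_X_sub_C φ hR'] at h
  rw [div_eq_div_iff (RatFunc.algebraMap_ne_zero (hmonic _).ne_zero)
    (RatFunc.algebraMap_ne_zero (hmonic _).ne_zero), ← map_mul, ← map_mul] at h
  obtain ⟨hPA, hPR⟩ := (hmonic _).eq_of_mul_eq_mul_of_isCoprime (hmonic _)
    (hcoprime hA hR hAR) (hcoprime hA' hR' hAR') (RatFunc.algebraMap_injective K h)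
  exact ⟨Set.Finite.toFinset_inj.mp (hP hPA), Set.Finite.toFinset_inj.mp (hP hPR)⟩

end LinearFactors

namespace YoungDiagram

theorem rowLen_eq_zero_iff {μ : YoungDiagram} {i : ℕ} : μ.rowLen i = 0 ↔ μ.colLen 0 ≤ i := by
  rw [← not_lt, ← mem_iff_lt_colLen, mem_iff_lt_rowLen, Nat.pos_iff_ne_zero, not_not]

theorem eq_of_rowLen_eq {μ ν : YoungDiagram} (h : ∀ i, μ.rowLen i = ν.rowLen i) : μ = ν := by
  ext ⟨i, j⟩
  simp only [mem_cells, mem_iff_lt_rowLen, h]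

end YoungDiagram

open YoungDiagram

theorem isAddable_iff {μ : YoungDiagram} {i j : ℕ} :
    IsAddable μ (i, j) ↔ j = μ.rowLen i ∧ ∀ k, i = k + 1 → μ.rowLen i < μ.rowLen k := by
  simp only [IsAddable, isLowerSet_insert_iff μ.isLowerSet, Finset.mem_coe, mem_cells,
    mem_iff_lt_rowLen, not_lt]
  refine ⟨fun ⟨hj, h⟩ => ?_, ?_⟩
  · have hrow : j = μ.rowLen i := by
      rcases Nat.eq_zero_or_pos j with rfl | hpos
      · omega
      · have := mem_iff_lt_rowLen.mp (h (i, j - 1) (Prod.mk_lt_mk.mpr (Or.inr ⟨le_rfl, by omega⟩)))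
        omega
    refine ⟨hrow, fun k hk => ?_⟩
    have := mem_iff_lt_rowLen.mp (h (k, j) (Prod.mk_lt_mk.mpr (Or.inl ⟨by omega, le_rfl⟩)))
    omega
  · rintro ⟨rfl, h⟩
    refine ⟨le_rfl, fun ⟨k, l⟩ hkl => mem_iff_lt_rowLen.mpr ?_⟩
    rcases Prod.mk_lt_mk.mp hkl with ⟨hk, hl⟩ | ⟨hk, hl⟩
    · have := h (i - 1) (by omega)
      have := μ.rowLen_anti k (i - 1) (by omega)
      omega
    · have := μ.rowLen_anti k i hk
      omega

theorem isRemovable_iff {μ : YoungDiagram} {i j : ℕ} :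
    IsRemovable μ (i, j) ↔ j + 1 = μ.rowLen i ∧ μ.rowLen (i + 1) ≤ j := by
  simp only [IsRemovable, isLowerSet_diff_singleton_iff μ.isLowerSet, Finset.mem_coe, mem_cells,
    mem_iff_lt_rowLen]
  refine ⟨fun ⟨hj, h⟩ => ?_, ?_⟩
  · have h₁ := h (i, j + 1)
    have h₂ := h (i + 1, j)
    simp only [mem_iff_lt_rowLen, Prod.mk_lt_mk] at h₁ h₂
    omega
  · rintro ⟨hj, hrow⟩
    refine ⟨by omega, fun ⟨k, l⟩ hkl hlt => ?_⟩
    rw [mem_iff_lt_rowLen] at hkl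
    rcases Prod.mk_lt_mk.mp hlt with ⟨hk, hl⟩ | ⟨hk, hl⟩
    · have := μ.rowLen_anti (i + 1) k hk
      omega
    · have := μ.rowLen_anti i k hk
      omega

theorem finite_addable (μ : YoungDiagram) : {c | IsAddable μ c}.Finite := by
  refine (Set.finite_Iic (μ.colLen 0, μ.rowLen 0)).subset fun ⟨i, j⟩ hc => ?_
  obtain ⟨rfl, h⟩ := isAddable_iff.mp hc
  refine Prod.mk_le_mk.mpr ⟨?_, μ.rowLen_anti 0 i (Nat.zero_le i)⟩
  by_contra! hi
  have := h (i - 1) (by omega)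
  have := rowLen_eq_zero_iff.mpr (by omega : μ.colLen 0 ≤ i - 1)
  omega

theorem finite_removable (μ : YoungDiagram) : {c | IsRemovable μ c}.Finite :=
  μ.cells.finite_toSet.subset fun _ hc => hc.1

def betaNumber (μ : YoungDiagram) (s : ℤ) (i : ℕ) : ℤ := s + μ.rowLen i - i

def mayaDiagram (μ : YoungDiagram) (s : ℤ) : Set ℤ := Set.range (betaNumber μ s)

section BetaNumbers

variable (μ : YoungDiagram) (s : ℤ)

theorem cont_rowLen (i : ℕ) : cont s (i, μ.rowLen i) = betaNumber μ s i := rfl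

theorem betaNumber_strictAnti : StrictAnti (betaNumber μ s) :=
  strictAnti_nat_of_succ_lt fun i => by
    have := μ.rowLen_anti i (i + 1) (by omega)
    simp only [betaNumber]
    push_cast
    omega

theorem bddAbove_mayaDiagram : BddAbove (mayaDiagram μ s) :=
  ⟨betaNumber μ s 0, Set.forall_mem_range.mpr fun i =>
    (betaNumber_strictAnti μ s).antitone (Nat.zero_le i)⟩

theorem betaNumber_add_one_mem_mayaDiagram_iff (i : ℕ) :
    betaNumber μ s i + 1 ∈ mayaDiagram μ s ↔ ∃ k, i = k + 1 ∧ μ.rowLen k = μ.rowLen i := by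
  rw [mayaDiagram, (betaNumber_strictAnti μ s).add_one_mem_range_iff]
  refine exists_congr fun k => and_congr_right fun hk => ?_
  subst hk
  simp only [betaNumber]
  push_cast
  omega

theorem betaNumber_sub_one_mem_mayaDiagram_iff (i : ℕ) :
    betaNumber μ s i - 1 ∈ mayaDiagram μ s ↔ μ.rowLen (i + 1) = μ.rowLen i := by
  rw [mayaDiagram, (betaNumber_strictAnti μ s).sub_one_mem_range_iff]
  simp only [betaNumber]
  push_cast
  omega

theorem cont_image_addable :
    cont s '' {c | IsAddable μ c} = {x | x ∈ mayaDiagram μ s ∧ x + 1 ∉ mayaDiagram μ s} := by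
  ext x
  constructor
  · rintro ⟨⟨i, j⟩, hc, rfl⟩
    obtain ⟨rfl, h⟩ := isAddable_iff.mp hc
    refine ⟨⟨i, rfl⟩, ?_⟩
    rw [cont_rowLen, betaNumber_add_one_mem_mayaDiagram_iff]
    rintro ⟨k, hk, hrow⟩
    exact (h k hk).ne' hrow
  · rintro ⟨⟨i, rfl⟩, hi⟩
    rw [betaNumber_add_one_mem_mayaDiagram_iff] at hi
    refine ⟨(i, μ.rowLen i), isAddable_iff.mpr ⟨rfl, fun k hk => ?_⟩, rfl⟩
    exact (μ.rowLen_anti k i (by omega)).lt_of_ne fun h => hi ⟨k, hk, h.symm⟩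

theorem cont_image_removable :
    cont s '' {c | IsRemovable μ c} = {x | x ∉ mayaDiagram μ s ∧ x + 1 ∈ mayaDiagram μ s} := by
  ext x
  constructor
  · rintro ⟨⟨i, j⟩, hc, rfl⟩
    obtain ⟨hj, hrow⟩ := isRemovable_iff.mp hc
    have hcont : cont s (i, j) = betaNumber μ s i - 1 := by
      simp only [cont, betaNumber]
      omega
    rw [hcont]
    refine ⟨?_, i, (sub_add_cancel _ _).symm⟩
    rw [betaNumber_sub_one_mem_mayaDiagram_iff]
    omega
  · rintro ⟨hx, ⟨i, hi⟩⟩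
    obtain rfl : x = betaNumber μ s i - 1 := by omega
    rw [betaNumber_sub_one_mem_mayaDiagram_iff] at hx
    have := μ.rowLen_anti i (i + 1) (by omega)
    refine ⟨(i, μ.rowLen i - 1), isRemovable_iff.mpr ⟨by omega, by omega⟩, ?_⟩
    simp only [cont, betaNumber]
    omega

theorem injOn_cont_addable : Set.InjOn (cont s) {c | IsAddable μ c} := by
  rintro ⟨i, j⟩ hc ⟨i', j'⟩ hc' h
  obtain ⟨rfl, -⟩ := isAddable_iff.mp hc
  obtain ⟨rfl, -⟩ := isAddable_iff.mp hc'
  rw [cont_rowLen, cont_rowLen] at h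
  rw [(betaNumber_strictAnti μ s).injective h]

theorem injOn_cont_removable : Set.InjOn (cont s) {c | IsRemovable μ c} := by
  rintro ⟨i, j⟩ hc ⟨i', j'⟩ hc' h
  obtain ⟨hj, -⟩ := isRemovable_iff.mp hc
  obtain ⟨hj', -⟩ := isRemovable_iff.mp hc'
  have hβ : betaNumber μ s i = betaNumber μ s i' := by
    simp only [cont, betaNumber] at h ⊢
    omega
  obtain rfl := (betaNumber_strictAnti μ s).injective hβ
  rw [show j = j' by omega]

theorem disjoint_cont_image_addable_removable :
    Disjoint (cont s '' {c | IsAddable μ c}) (cont s '' {c | IsRemovable μ c}) := by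
  rw [cont_image_addable, cont_image_removable]
  exact Set.disjoint_left.mpr fun _ hA hR => hR.1 hA.1

end BetaNumbers

theorem eq_of_mayaDiagram_eq {μ μ' : YoungDiagram} {s s' : ℤ}
    (h : mayaDiagram μ s = mayaDiagram μ' s') : μ = μ' ∧ s = s' := by
  have hβ : betaNumber μ s = betaNumber μ' s' :=
    ((betaNumber_strictAnti μ s).dual_right.range_inj (betaNumber_strictAnti μ' s').dual_right).mp h
  have hs : s = s' := by
    have hN := congrFun hβ (max (μ.colLen 0) (μ'.colLen 0))
    have h₁ := rowLen_eq_zero_iff.mpr (le_max_left (μ.colLen 0) (μ'.colLen 0))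
    have h₂ := rowLen_eq_zero_iff.mpr (le_max_right (μ.colLen 0) (μ'.colLen 0))
    simp only [betaNumber, h₁, h₂] at hN
    omega
  refine ⟨eq_of_rowLen_eq fun i => ?_, hs⟩
  have := congrFun hβ i
  simp only [betaNumber, hs] at this
  omega

theorem contentFun_eq (μ : YoungDiagram) (s : ℤ) :
    contentFun μ s =
      (∏ᶠ x ∈ cont s '' {c | IsAddable μ c}, (RatFunc.X - RatFunc.C (x : ℚ))) /
        ∏ᶠ x ∈ cont s '' {c | IsRemovable μ c}, (RatFunc.X - RatFunc.C (x : ℚ)) := by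
  rw [contentFun, finprod_mem_image (injOn_cont_addable μ s),
    finprod_mem_image (injOn_cont_removable μ s)]

/-- The content function is injective on charged partitions. -/
theorem contentFun_injective (μ μ' : YoungDiagram) (s s' : ℤ)
    (h : contentFun μ s = contentFun μ' s') : μ = μ' ∧ s = s' := by
  rw [contentFun_eq, contentFun_eq] at h
  obtain ⟨hA, hR⟩ := RatFunc.eq_of_finprod_div_finprod_eq Int.cast_injective
    ((finite_addable μ).image _) ((finite_removable μ).image _)
    ((finite_addable μ').image _) ((finite_removable μ').image _)
    (disjoint_cont_image_addable_removable μ s) (disjoint_cont_image_addable_removable μ' s') h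
  rw [cont_image_addable, cont_image_addable] at hA
  rw [cont_image_removable, cont_image_removable] at hR
  exact eq_of_mayaDiagram_eq <| Int.eq_of_bddAbove_of_boundary_eq
    (bddAbove_mayaDiagram μ s) (bddAbove_mayaDiagram μ' s') hA hR

end
end

section
/- Fix a real number q > 1. The map sending a pair of charged partitions (|λ₁,s₁⟩, |λ₂,s₂⟩) to the product O^{(q,+1)}_{|λ₁,s₁⟩}(u) · O^{(q,−1)}_{|λ₂,s₂⟩}(u) ∈ ℝ(u) is injective: if two such pairs give the same rational function, then λ₁ = λ₁′, s₁ = s₁′, λ₂ = λ₂′ and s₂ = s₂′. -/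
/-!
For a real `q > 1`, the map sending a pair of charged partitions
`(|λ₁,s₁⟩, |λ₂,s₂⟩)` to `O^{(q,+1)}_{|λ₁,s₁⟩}(u) · O^{(q,-1)}_{|λ₂,s₂⟩}(u) ∈ ℝ(u)`
is injective.
-/

open scoped Classical

noncomputable section

/-- The `(q, ε)`-residue function of the charged partition `|μ, s⟩`, as an element of `ℝ(u)`. -/
def residueFun (q ε : ℝ) (μ : YoungDiagram) (s : ℤ) : RatFunc ℝ :=
  (∏ᶠ c ∈ {c | IsAddable μ c}, (RatFunc.X - RatFunc.C (ε * q ^ (cont s c)))) /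
    (∏ᶠ c ∈ {c | IsRemovable μ c}, (RatFunc.X - RatFunc.C (ε * q ^ (cont s c))))

namespace ResidueProof

lemma rowLen_pos_iff (μ : YoungDiagram) (i : ℕ) : 0 < μ.rowLen i ↔ i < μ.colLen 0 := by
  rw [← YoungDiagram.mem_iff_lt_rowLen, YoungDiagram.mem_iff_lt_colLen]

/-- The beta sequence of a charged partition. -/
def beta (μ : YoungDiagram) (s : ℤ) (i : ℕ) : ℤ := s + (μ.rowLen i : ℤ) - i

lemma beta_lt (μ : YoungDiagram) (s : ℤ) {i j : ℕ} (h : i < j) : beta μ s j < beta μ s i := by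
  have h1 : μ.rowLen j ≤ μ.rowLen i := μ.rowLen_anti i j h.le
  unfold beta; omega

lemma beta_inj (μ : YoungDiagram) (s : ℤ) {i j : ℕ} (h : beta μ s i = beta μ s j) : i = j := by
  rcases lt_trichotomy i j with hc | hc | hc
  · exact absurd h (beta_lt μ s hc).ne'
  · exact hc
  · exact absurd h (beta_lt μ s hc).ne

def addCond (μ : YoungDiagram) (i : ℕ) : Prop := i = 0 ∨ μ.rowLen i < μ.rowLen (i - 1)

def remCond (μ : YoungDiagram) (i : ℕ) : Prop := μ.rowLen (i + 1) < μ.rowLen i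

lemma isAddable_iff_mk (μ : YoungDiagram) (i j : ℕ) :
    IsAddable μ (i, j) ↔ j = μ.rowLen i ∧ addCond μ i := by
  constructor
  · rintro ⟨hnm, hls⟩
    have hge : μ.rowLen i ≤ j := by
      by_contra hlt
      exact hnm (YoungDiagram.mem_iff_lt_rowLen.2 (by omega))
    have hje : j = μ.rowLen i := by
      rcases eq_or_lt_of_le hge with h | h
      · exact h.symm
      · exfalso
        have hmem : (i, μ.rowLen i) ∈ insert (i, j) (μ.cells : Set (ℕ × ℕ)) :=
          hls (⟨le_refl i, h.le⟩ : (i, μ.rowLen i) ≤ (i, j)) (Set.mem_insert _ _)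
        rcases hmem with h' | h'
        · exact absurd (Prod.ext_iff.1 h').2 h.ne
        · exact absurd (YoungDiagram.mem_iff_lt_rowLen.1 ((YoungDiagram.mem_cells _).1 (Finset.mem_coe.1 h')))
            (lt_irrefl _)
    refine ⟨hje, ?_⟩
    rcases Nat.eq_zero_or_pos i with hi | hi
    · exact Or.inl hi
    · right
      have hmem : ((i - 1 : ℕ), j) ∈ insert (i, j) (μ.cells : Set (ℕ × ℕ)) :=
        hls (⟨by omega, le_refl j⟩ : ((i - 1 : ℕ), j) ≤ (i, j)) (Set.mem_insert _ _)
      rcases hmem with h' | h'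
      · exact absurd (Prod.ext_iff.1 h').1 (by omega)
      · have := YoungDiagram.mem_iff_lt_rowLen.1 ((YoungDiagram.mem_cells _).1 (Finset.mem_coe.1 h'))
        omega
  · rintro ⟨hj, hcond⟩
    subst hj
    refine ⟨fun hmem => by simpa using YoungDiagram.mem_iff_lt_rowLen.1 hmem, ?_⟩
    rintro ⟨a1, a2⟩ ⟨b1, b2⟩ ⟨hb1, hb2⟩ ha
    dsimp only at *
    simp only [Set.mem_insert_iff] at ha ⊢
    rcases ha with ha | ha
    · -- a = (i, rowLen i)
      rw [Prod.mk.injEq] at ha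
      obtain ⟨rfl, rfl⟩ := ha
      by_cases hbc : (b1, b2) = (a1, μ.rowLen a1)
      · exact Or.inl hbc
      · right
        rw [Prod.mk.injEq, not_and] at hbc
        refine Finset.mem_coe.2 ∘ (YoungDiagram.mem_cells _).2 <| (YoungDiagram.mem_iff_lt_rowLen.2 ?_)
        rcases eq_or_lt_of_le hb1 with rfl | hlt
        · have : b2 ≠ μ.rowLen b1 := hbc rfl
          omega
        · -- b1 < a1
          rcases hcond with rfl | hcond
          · omega
          · have h1 : μ.rowLen (a1 - 1) ≤ μ.rowLen b1 := μ.rowLen_anti _ _ (by omega)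
            omega
    · exact Or.inr (Finset.mem_coe.2 ∘ (YoungDiagram.mem_cells _).2 <|
        (μ.isLowerSet (⟨hb1, hb2⟩ : (b1, b2) ≤ (a1, a2)) ((YoungDiagram.mem_cells _).1 (Finset.mem_coe.1 ha))))

lemma isRemovable_iff_mk (μ : YoungDiagram) (i j : ℕ) :
    IsRemovable μ (i, j) ↔ j + 1 = μ.rowLen i ∧ remCond μ i := by
  constructor
  · rintro ⟨hmem, hls⟩
    have hjlt : j < μ.rowLen i := YoungDiagram.mem_iff_lt_rowLen.1 hmem
    have hje : j + 1 = μ.rowLen i := by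
      by_contra hne
      have hmem2 : (i, j + 1) ∈ (μ.cells : Set (ℕ × ℕ)) \ {(i, j)} := by
        refine ⟨Finset.mem_coe.2 ∘ (YoungDiagram.mem_cells _).2 <| (YoungDiagram.mem_iff_lt_rowLen.2 (by omega)), ?_⟩
        simp [Prod.ext_iff]
      have := hls (⟨le_refl i, by omega⟩ : (i, j) ≤ (i, j + 1)) hmem2
      simp at this
    refine ⟨hje, ?_⟩
    unfold remCond
    by_contra hle
    push_neg at hle
    have hmem2 : (i + 1, j) ∈ (μ.cells : Set (ℕ × ℕ)) \ {(i, j)} := by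
      refine ⟨Finset.mem_coe.2 ∘ (YoungDiagram.mem_cells _).2 <| (YoungDiagram.mem_iff_lt_rowLen.2 (by omega)), ?_⟩
      simp [Prod.ext_iff]
    have := hls (⟨by omega, le_refl j⟩ : (i, j) ≤ (i + 1, j)) hmem2
    simp at this
  · rintro ⟨hj, hcond⟩
    unfold remCond at hcond
    refine ⟨YoungDiagram.mem_iff_lt_rowLen.2 (by omega), ?_⟩
    rintro ⟨a1, a2⟩ ⟨b1, b2⟩ ⟨hb1, hb2⟩ ⟨ha, hane⟩
    dsimp only at *
    have hamem := YoungDiagram.mem_iff_lt_rowLen.1 ((YoungDiagram.mem_cells _).1 (Finset.mem_coe.1 ha))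
    constructor
    · exact Finset.mem_coe.2 ∘ (YoungDiagram.mem_cells _).2 <|
        (μ.isLowerSet (⟨hb1, hb2⟩ : (b1, b2) ≤ (a1, a2)) ((YoungDiagram.mem_cells _).1 (Finset.mem_coe.1 ha)))
    · -- b ≠ (i,j)
      simp only [Set.mem_singleton_iff, Prod.mk.injEq, not_and] at hane ⊢
      rintro rfl rfl
      -- b1 = i, b2 = j; a ≥ (i,j), a ∈ μ, a ≠ (i,j)
      rcases eq_or_lt_of_le hb1 with rfl | hlt
      · have : a2 ≠ b2 := fun h => hane rfl h
        omega
      · have : μ.rowLen a1 ≤ μ.rowLen (b1 + 1) := μ.rowLen_anti _ _ (by omega)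
        omega

lemma isAddable_iff (μ : YoungDiagram) (c : ℕ × ℕ) :
    IsAddable μ c ↔ c.2 = μ.rowLen c.1 ∧ addCond μ c.1 := by
  obtain ⟨i, j⟩ := c; exact isAddable_iff_mk μ i j

lemma isRemovable_iff (μ : YoungDiagram) (c : ℕ × ℕ) :
    IsRemovable μ c ↔ c.2 + 1 = μ.rowLen c.1 ∧ remCond μ c.1 := by
  obtain ⟨i, j⟩ := c; exact isRemovable_iff_mk μ i j


lemma addCond_lt {μ : YoungDiagram} {i : ℕ} (h : addCond μ i) : i < μ.colLen 0 + 1 := by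
  rcases h with rfl | h
  · omega
  · have h2 : 0 < μ.rowLen (i - 1) := by omega
    have := (rowLen_pos_iff μ (i - 1)).1 h2
    have h3 : i ≠ 0 := by
      rintro rfl
      simp at h
    omega

lemma remCond_lt {μ : YoungDiagram} {i : ℕ} (h : remCond μ i) : i < μ.colLen 0 := by
  unfold remCond at h
  exact (rowLen_pos_iff μ i).1 (by omega)

def addRows (μ : YoungDiagram) : Finset ℕ :=
  (Finset.range (μ.colLen 0 + 1)).filter (addCond μ)

def remRows (μ : YoungDiagram) : Finset ℕ :=
  (Finset.range (μ.colLen 0)).filter (remCond μ)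

lemma mem_addRows (μ : YoungDiagram) (i : ℕ) : i ∈ addRows μ ↔ addCond μ i := by
  simp only [addRows, Finset.mem_filter, Finset.mem_range, and_iff_right_iff_imp]
  exact addCond_lt

lemma mem_remRows (μ : YoungDiagram) (i : ℕ) : i ∈ remRows μ ↔ remCond μ i := by
  simp only [remRows, Finset.mem_filter, Finset.mem_range, and_iff_right_iff_imp]
  exact remCond_lt

def addF (μ : YoungDiagram) : Finset (ℕ × ℕ) := (addRows μ).image fun i => (i, μ.rowLen i)

def remF (μ : YoungDiagram) : Finset (ℕ × ℕ) := (remRows μ).image fun i => (i, μ.rowLen i - 1)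

lemma coe_addF (μ : YoungDiagram) : (addF μ : Set (ℕ × ℕ)) = {c | IsAddable μ c} := by
  ext ⟨i, j⟩
  simp only [Set.mem_setOf_eq, isAddable_iff_mk, addF, Finset.coe_image, Set.mem_image,
    Finset.mem_coe, mem_addRows]
  constructor
  · rintro ⟨a, ha, heq⟩
    rw [Prod.mk.injEq] at heq
    obtain ⟨rfl, rfl⟩ := heq
    exact ⟨rfl, ha⟩
  · rintro ⟨rfl, hc⟩
    exact ⟨i, hc, rfl⟩

lemma coe_remF (μ : YoungDiagram) : (remF μ : Set (ℕ × ℕ)) = {c | IsRemovable μ c} := by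
  ext ⟨i, j⟩
  simp only [Set.mem_setOf_eq, isRemovable_iff_mk, remF, Finset.coe_image, Set.mem_image,
    Finset.mem_coe, mem_remRows]
  constructor
  · rintro ⟨a, ha, heq⟩
    rw [Prod.mk.injEq] at heq
    obtain ⟨rfl, rfl⟩ := heq
    have := remCond_lt ha
    have h2 : 0 < μ.rowLen a := by
      have := μ.rowLen_anti a a le_rfl
      unfold remCond at ha
      omega
    exact ⟨by omega, ha⟩
  · rintro ⟨hj, hc⟩
    exact ⟨i, hc, by rw [Prod.mk.injEq]; omega⟩

/-- The multiset of contents of addable boxes. -/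
def CA (μ : YoungDiagram) (s : ℤ) : Multiset ℤ := (addRows μ).val.map (beta μ s)

/-- The multiset of contents of removable boxes. -/
def CR (μ : YoungDiagram) (s : ℤ) : Multiset ℤ := (remRows μ).val.map (fun i => beta μ s i - 1)

lemma filter_range_eq (P : ℕ → Prop) [DecidablePred P] {a b : ℕ} (h : ∀ i, P i → i < a)
    (hab : a ≤ b) : (Finset.range a).filter P = (Finset.range b).filter P := by
  ext i
  simp only [Finset.mem_filter, Finset.mem_range]
  constructor
  · rintro ⟨h1, h2⟩; exact ⟨by omega, h2⟩
  · rintro ⟨h1, h2⟩; exact ⟨h i h2, h2⟩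

lemma card_CA_filter (μ : YoungDiagram) (s k : ℤ) {n : ℕ} (hn : μ.colLen 0 + 1 ≤ n) :
    Multiset.card ((CA μ s).filter (fun z => k ≤ z)) =
      ∑ i ∈ Finset.range n, (if addCond μ i ∧ k ≤ beta μ s i then 1 else 0) := by
  rw [CA, Multiset.filter_map, Multiset.card_map]
  have h1 : (addRows μ).val.filter ((fun z => k ≤ z) ∘ beta μ s) =
      ((addRows μ).filter (fun i => k ≤ beta μ s i)).val := rfl
  rw [h1, ← Finset.card_def, addRows, Finset.filter_filter]
  rw [filter_range_eq (fun i => addCond μ i ∧ k ≤ beta μ s i) (fun i hi => addCond_lt hi.1) hn]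
  rw [Finset.card_filter]

lemma card_CR_filter (μ : YoungDiagram) (s k : ℤ) {n : ℕ} (hn : μ.colLen 0 ≤ n) :
    Multiset.card ((CR μ s).filter (fun z => k ≤ z)) =
      ∑ i ∈ Finset.range n, (if remCond μ i ∧ k + 1 ≤ beta μ s i then 1 else 0) := by
  rw [CR, Multiset.filter_map, Multiset.card_map]
  have h1 : (remRows μ).val.filter ((fun z => k ≤ z) ∘ (fun i => beta μ s i - 1)) =
      ((remRows μ).filter (fun i => k ≤ beta μ s i - 1)).val := rfl
  rw [h1, ← Finset.card_def, remRows, Finset.filter_filter]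
  rw [filter_range_eq (fun i => remCond μ i ∧ k ≤ beta μ s i - 1) (fun i hi => remCond_lt hi.1) hn]
  rw [Finset.card_filter]
  exact Finset.sum_congr rfl fun i _ => if_congr (and_congr_right fun _ => by omega) rfl rfl

lemma count_key (μ : YoungDiagram) (s k : ℤ) :
    Multiset.card ((CA μ s).filter (fun z => k ≤ z)) =
      Multiset.card ((CR μ s).filter (fun z => k ≤ z)) +
        (if ∃ i, beta μ s i = k then 1 else 0) := by
  classical
  set m : ℕ := μ.colLen 0 + (s + 1 - k).toNat with hm
  have hcol : μ.colLen 0 ≤ m := by omega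
  have hrl : μ.rowLen m = 0 := by
    have := rowLen_pos_iff μ m
    omega
  have hβm : beta μ s m < k := by
    have h2 : s + 1 - k ≤ ((s + 1 - k).toNat : ℤ) := Int.self_le_toNat _
    unfold beta
    rw [hrl]
    push_cast
    omega
  set n : ℕ := m + 1 with hn
  -- the four indicator families
  set a : ℕ → ℕ := fun i => if addCond μ i ∧ k ≤ beta μ s i then 1 else 0 with ha
  set r : ℕ → ℕ := fun i => if remCond μ i ∧ k + 1 ≤ beta μ s i then 1 else 0 with hr
  set u : ℕ → ℕ := fun i => if k ≤ beta μ s i then 1 else 0 with hu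
  set v : ℕ → ℕ := fun i => if k + 1 ≤ beta μ s i then 1 else 0 with hv
  have hCA : Multiset.card ((CA μ s).filter (fun z => k ≤ z)) = ∑ i ∈ Finset.range n, a i :=
    card_CA_filter μ s k (by omega)
  have hCR : Multiset.card ((CR μ s).filter (fun z => k ≤ z)) = ∑ i ∈ Finset.range n, r i :=
    card_CR_filter μ s k (by omega)
  have hstep : ∀ i, a (i + 1) + v i = r i + u (i + 1) := by
    intro i
    by_cases hlt : μ.rowLen (i + 1) < μ.rowLen i
    · simp only [ha, hr, hu, hv, addCond, remCond, Nat.add_sub_cancel, hlt, or_true,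
        true_and]
      split_ifs <;> omega
    · have heq : μ.rowLen (i + 1) = μ.rowLen i :=
        le_antisymm (μ.rowLen_anti i (i + 1) (by omega)) (not_lt.1 hlt)
      have hb : beta μ s i = beta μ s (i + 1) + 1 := by
        unfold beta; omega
      simp only [ha, hr, hu, hv, addCond, remCond, Nat.add_sub_cancel, hlt, or_false,
        Nat.succ_ne_zero, false_and, if_false]
      split_ifs <;> omega
  have ha0 : a 0 = u 0 := by
    have hc : addCond μ 0 := Or.inl rfl
    simp only [ha, hu, hc, true_and]
  have hvm : v m = 0 := by
    simp only [hv]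
    rw [if_neg]
    omega
  have hrm : r m = 0 := by
    simp only [hr]
    rw [if_neg]
    rintro ⟨h1, h2⟩
    omega
  have hsum : ∑ i ∈ Finset.range m, (a (i + 1) + v i) = ∑ i ∈ Finset.range m, (r i + u (i + 1)) :=
    Finset.sum_congr rfl fun i _ => hstep i
  rw [Finset.sum_add_distrib, Finset.sum_add_distrib] at hsum
  have hu_split : ∀ i, u i = v i + (if beta μ s i = k then 1 else 0) := by
    intro i
    simp only [hu, hv]
    split_ifs <;> omega
  have hw : ∑ i ∈ Finset.range n, (if beta μ s i = k then 1 else 0) =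
      (if ∃ i, beta μ s i = k then 1 else 0) := by
    by_cases hex : ∃ i, beta μ s i = k
    · obtain ⟨i0, hi0⟩ := hex
      have hi0m : i0 < m := by
        by_contra hge
        push_neg at hge
        rcases eq_or_lt_of_le hge with rfl | hl
        · omega
        · have := beta_lt μ s hl
          omega
      rw [if_pos ⟨i0, hi0⟩]
      rw [Finset.sum_eq_single_of_mem i0 (Finset.mem_range.2 (by omega))]
      · rw [if_pos hi0]
      · intro b _ hb
        rw [if_neg]
        intro hbk
        exact hb (beta_inj μ s (hbk.trans hi0.symm))
    · rw [if_neg hex, Finset.sum_eq_zero]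
      intro i _
      rw [if_neg]
      exact fun hik => hex ⟨i, hik⟩
  have hu_sum : ∑ i ∈ Finset.range n, u i =
      ∑ i ∈ Finset.range n, v i + (if ∃ i, beta μ s i = k then 1 else 0) := by
    rw [← hw, ← Finset.sum_add_distrib]
    exact Finset.sum_congr rfl fun i _ => hu_split i
  have hA' : ∑ i ∈ Finset.range n, a i = ∑ i ∈ Finset.range m, a (i + 1) + a 0 :=
    Finset.sum_range_succ' a m
  have hU' : ∑ i ∈ Finset.range n, u i = ∑ i ∈ Finset.range m, u (i + 1) + u 0 :=
    Finset.sum_range_succ' u m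
  have hV' : ∑ i ∈ Finset.range n, v i = ∑ i ∈ Finset.range m, v i + v m :=
    Finset.sum_range_succ v m
  have hR' : ∑ i ∈ Finset.range n, r i = ∑ i ∈ Finset.range m, r i + r m :=
    Finset.sum_range_succ r m
  omega

lemma beta_eq_of_range_eq {μ μ' : YoungDiagram} {s s' : ℤ}
    (hb : ∀ k, (∃ i, beta μ s i = k) ↔ (∃ i, beta μ' s' i = k)) :
    ∀ n, beta μ s n = beta μ' s' n := by
  intro n
  induction n using Nat.strong_induction_on with
  | _ n ih =>
    rcases lt_trichotomy (beta μ s n) (beta μ' s' n) with hlt | he | hgt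
    · exfalso
      obtain ⟨m, hm⟩ := (hb (beta μ' s' n)).2 ⟨n, rfl⟩
      have hmn : m < n := by
        by_contra hge
        push_neg at hge
        rcases eq_or_lt_of_le hge with rfl | hl
        · omega
        · have := beta_lt μ s hl
          omega
      have h2 := ih m hmn
      have := beta_inj μ' s' (h2.symm.trans hm)
      omega
    · exact he
    · exfalso
      obtain ⟨m, hm⟩ := (hb (beta μ s n)).1 ⟨n, rfl⟩
      have hmn : m < n := by
        by_contra hge
        push_neg at hge
        rcases eq_or_lt_of_le hge with rfl | hl
        · omega
        · have := beta_lt μ' s' hl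
          omega
      have h2 := ih m hmn
      have := beta_inj μ s (h2.trans hm)
      omega

lemma contents_inj {μ μ' : YoungDiagram} {s s' : ℤ}
    (h : CA μ s + CR μ' s' = CA μ' s' + CR μ s) : μ = μ' ∧ s = s' := by
  classical
  have hbeta : ∀ k, (∃ i, beta μ s i = k) ↔ (∃ i, beta μ' s' i = k) := by
    intro k
    have hc := congrArg (fun M => Multiset.card (M.filter (fun z => k ≤ z))) h
    simp only [Multiset.filter_add, Multiset.card_add] at hc
    have h1 := count_key μ s k
    have h2 := count_key μ' s' k
    constructor
    · intro he1
      by_contra he2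
      rw [if_pos he1] at h1
      rw [if_neg he2] at h2
      omega
    · intro he2
      by_contra he1
      rw [if_neg he1] at h1
      rw [if_pos he2] at h2
      omega
  have hfun := beta_eq_of_range_eq hbeta
  have hss : s = s' := by
    set N : ℕ := max (μ.colLen 0) (μ'.colLen 0) with hN
    have h1 : μ.rowLen N = 0 := by
      have := rowLen_pos_iff μ N
      omega
    have h2 : μ'.rowLen N = 0 := by
      have := rowLen_pos_iff μ' N
      omega
    have := hfun N
    unfold beta at this
    omega
  subst hss
  refine ⟨?_, rfl⟩
  have hrow : ∀ i, μ.rowLen i = μ'.rowLen i := by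
    intro i
    have := hfun i
    unfold beta at this
    omega
  ext ⟨i, j⟩
  rw [YoungDiagram.mem_cells, YoungDiagram.mem_cells, YoungDiagram.mem_iff_lt_rowLen,
    YoungDiagram.mem_iff_lt_rowLen, hrow]


open Polynomial

/-- Product of monic linear factors attached to a multiset of reals. -/
def Phi (M : Multiset ℝ) : Polynomial ℝ := (M.map fun a => X - C a).prod

lemma Phi_monic (M : Multiset ℝ) : (Phi M).Monic :=
  monic_multiset_prod_of_monic _ _ fun a _ => monic_X_sub_C a

lemma Phi_ne_zero (M : Multiset ℝ) : Phi M ≠ 0 := (Phi_monic M).ne_zero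

lemma Phi_add (M N : Multiset ℝ) : Phi (M + N) = Phi M * Phi N := by
  rw [Phi, Phi, Phi, Multiset.map_add, Multiset.prod_add]

lemma roots_Phi (M : Multiset ℝ) : (Phi M).roots = M := roots_multiset_prod_X_sub_C M

/-- The multiset of values `ε * q ^ z`. -/
def MV (q ε : ℝ) (M : Multiset ℤ) : Multiset ℝ := M.map fun z => ε * q ^ z

lemma MV_add (q ε : ℝ) (M N : Multiset ℤ) : MV q ε (M + N) = MV q ε M + MV q ε N :=
  Multiset.map_add _ _ _

lemma MV_pos (q : ℝ) (hq : 0 < q) (M : Multiset ℤ) : ∀ x ∈ MV q 1 M, 0 < x := by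
  intro x hx
  rw [MV, Multiset.mem_map] at hx
  obtain ⟨z, _, rfl⟩ := hx
  simpa using zpow_pos hq z

lemma MV_neg (q : ℝ) (hq : 0 < q) (M : Multiset ℤ) : ∀ x ∈ MV q (-1) M, ¬ (0 < x) := by
  intro x hx
  rw [MV, Multiset.mem_map] at hx
  obtain ⟨z, _, rfl⟩ := hx
  have := zpow_pos hq z
  simp only [neg_mul, one_mul, not_lt]
  linarith
  
lemma MV_injective (q : ℝ) (hq : 1 < q) {ε : ℝ} (hε : ε ≠ 0) :
    Function.Injective fun z : ℤ => ε * q ^ z := fun a b hab =>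
  (zpow_right_strictMono₀ hq).injective (mul_left_cancel₀ hε hab)

lemma cont_add_box (μ : YoungDiagram) (s : ℤ) (i : ℕ) :
    cont s (i, μ.rowLen i) = beta μ s i := by
  simp [cont, beta]

lemma cont_rem_box (μ : YoungDiagram) (s : ℤ) (i : ℕ) (h : 0 < μ.rowLen i) :
    cont s (i, μ.rowLen i - 1) = beta μ s i - 1 := by
  simp only [cont, beta]
  omega

lemma residueFun_eq (q ε : ℝ) (μ : YoungDiagram) (s : ℤ) :
    residueFun q ε μ s =
      algebraMap (Polynomial ℝ) (RatFunc ℝ) (Phi (MV q ε (CA μ s))) /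
        algebraMap (Polynomial ℝ) (RatFunc ℝ) (Phi (MV q ε (CR μ s))) := by
  have hA : {c | IsAddable μ c} = ↑(addF μ) := (coe_addF μ).symm
  have hR : {c | IsRemovable μ c} = ↑(remF μ) := (coe_remF μ).symm
  rw [residueFun, hA, hR, finprod_mem_coe_finset, finprod_mem_coe_finset]
  have hinj1 : Set.InjOn (fun i => (i, μ.rowLen i)) (addRows μ) := fun a _ b _ hab =>
    congrArg Prod.fst hab
  have hinj2 : Set.InjOn (fun i => (i, μ.rowLen i - 1)) (remRows μ) := fun a _ b _ hab =>
    congrArg Prod.fst hab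
  congr 1
  · rw [addF, Finset.prod_image fun a ha b hb hab => hinj1 ha hb hab]
    have : ∀ i ∈ addRows μ, RatFunc.X - RatFunc.C (ε * q ^ cont s (i, μ.rowLen i)) =
        algebraMap (Polynomial ℝ) (RatFunc ℝ) (X - C (ε * q ^ beta μ s i)) := by
      intro i _
      rw [cont_add_box, map_sub, RatFunc.algebraMap_X, RatFunc.algebraMap_C]
    rw [Finset.prod_congr rfl this, ← map_prod]
    congr 1
    rw [Phi, MV, CA, Multiset.map_map, Multiset.map_map]
    rfl
  · rw [remF, Finset.prod_image fun a ha b hb hab => hinj2 ha hb hab]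
    have : ∀ i ∈ remRows μ, RatFunc.X - RatFunc.C (ε * q ^ cont s (i, μ.rowLen i - 1)) =
        algebraMap (Polynomial ℝ) (RatFunc ℝ) (X - C (ε * q ^ (beta μ s i - 1))) := by
      intro i hi
      have h0 : 0 < μ.rowLen i := by
        have h1 := (mem_remRows μ i).1 hi
        unfold remCond at h1
        omega
      rw [cont_rem_box μ s i h0, map_sub, RatFunc.algebraMap_X, RatFunc.algebraMap_C]
    rw [Finset.prod_congr rfl this, ← map_prod]
    congr 1
    rw [Phi, MV, CR, Multiset.map_map, Multiset.map_map]
    rfl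

lemma main_aux (q : ℝ) (hq : 1 < q)
    (μ₁ μ₂ μ₁' μ₂' : YoungDiagram) (s₁ s₂ s₁' s₂' : ℤ)
    (h : residueFun q 1 μ₁ s₁ * residueFun q (-1) μ₂ s₂ =
      residueFun q 1 μ₁' s₁' * residueFun q (-1) μ₂' s₂') :
    μ₁ = μ₁' ∧ s₁ = s₁' ∧ μ₂ = μ₂' ∧ s₂ = s₂' := by
  classical
  have hq0 : (0 : ℝ) < q := lt_trans one_pos hq
  rw [residueFun_eq, residueFun_eq, residueFun_eq, residueFun_eq] at h
  rw [div_mul_div_comm, div_mul_div_comm] at h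
  rw [← map_mul, ← map_mul, ← map_mul, ← map_mul] at h
  have hne : ∀ M N : Multiset ℝ,
      algebraMap (Polynomial ℝ) (RatFunc ℝ) (Phi M * Phi N) ≠ 0 := fun M N =>
    RatFunc.algebraMap_ne_zero (mul_ne_zero (Phi_ne_zero M) (Phi_ne_zero N))
  rw [div_eq_div_iff (hne _ _) (hne _ _), ← map_mul, ← map_mul] at h
  have h' := RatFunc.algebraMap_injective ℝ h
  have h2 : Phi (MV q 1 (CA μ₁ s₁) + MV q (-1) (CA μ₂ s₂) +
        (MV q 1 (CR μ₁' s₁') + MV q (-1) (CR μ₂' s₂'))) =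
      Phi (MV q 1 (CA μ₁' s₁') + MV q (-1) (CA μ₂' s₂') +
        (MV q 1 (CR μ₁ s₁) + MV q (-1) (CR μ₂ s₂))) := by
    rw [Phi_add, Phi_add, Phi_add, Phi_add, Phi_add, Phi_add]
    exact h'
  have hroots := congrArg Polynomial.roots h2
  rw [roots_Phi, roots_Phi] at hroots
  -- positive roots
  have hpos := congrArg (Multiset.filter (fun x : ℝ => 0 < x)) hroots
  simp only [Multiset.filter_add] at hpos
  rw [Multiset.filter_eq_self.2 (MV_pos q hq0 _), Multiset.filter_eq_self.2 (MV_pos q hq0 _),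
    Multiset.filter_eq_self.2 (MV_pos q hq0 _), Multiset.filter_eq_self.2 (MV_pos q hq0 _),
    Multiset.filter_eq_nil.2 (MV_neg q hq0 _), Multiset.filter_eq_nil.2 (MV_neg q hq0 _),
    Multiset.filter_eq_nil.2 (MV_neg q hq0 _), Multiset.filter_eq_nil.2 (MV_neg q hq0 _),
    add_zero, add_zero, add_zero, add_zero] at hpos
  rw [← MV_add, ← MV_add] at hpos
  have hmapinj1 := Multiset.map_injective (α := ℤ) (β := ℝ)
    (MV_injective q hq (one_ne_zero (α := ℝ)))
  have e1 := contents_inj (hmapinj1 hpos)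
  -- negative roots
  have hneg := congrArg (Multiset.filter (fun x : ℝ => ¬ 0 < x)) hroots
  simp only [Multiset.filter_add] at hneg
  rw [Multiset.filter_eq_self.2 (MV_neg q hq0 _), Multiset.filter_eq_self.2 (MV_neg q hq0 _),
    Multiset.filter_eq_self.2 (MV_neg q hq0 _), Multiset.filter_eq_self.2 (MV_neg q hq0 _),
    Multiset.filter_eq_nil.2 (fun x hx => not_not_intro (MV_pos q hq0 _ x hx)),
    Multiset.filter_eq_nil.2 (fun x hx => not_not_intro (MV_pos q hq0 _ x hx)),
    Multiset.filter_eq_nil.2 (fun x hx => not_not_intro (MV_pos q hq0 _ x hx)),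
    Multiset.filter_eq_nil.2 (fun x hx => not_not_intro (MV_pos q hq0 _ x hx)),
    zero_add, zero_add, zero_add, zero_add] at hneg
  rw [← MV_add, ← MV_add] at hneg
  have hmapinj2 := Multiset.map_injective (α := ℤ) (β := ℝ)
    (MV_injective q hq (neg_ne_zero.2 (one_ne_zero (α := ℝ))))
  have e2 := contents_inj (hmapinj2 hneg)
  exact ⟨e1.1, e1.2, e2.1, e2.2⟩

end ResidueProof

/-- The product `O^{(q,+1)}_{|λ₁,s₁⟩}(u) · O^{(q,-1)}_{|λ₂,s₂⟩}(u)` determines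
the pair of charged partitions `(|λ₁,s₁⟩, |λ₂,s₂⟩)`. -/
theorem residueFun_prod_injective (q : ℝ) (hq : 1 < q)
    (μ₁ μ₂ μ₁' μ₂' : YoungDiagram) (s₁ s₂ s₁' s₂' : ℤ)
    (h : residueFun q 1 μ₁ s₁ * residueFun q (-1) μ₂ s₂ =
      residueFun q 1 μ₁' s₁' * residueFun q (-1) μ₂' s₂') :
    μ₁ = μ₁' ∧ s₁ = s₁' ∧ μ₂ = μ₂' ∧ s₂ = s₂' :=
  ResidueProof.main_aux q hq μ₁ μ₂ μ₁' μ₂' s₁ s₂ s₁' s₂' h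

end
end

section
/- Rank, defect and Υ are constant on equivalence classes of symbols; for every symbol Λ one has rank(Λ) = |Υ(Λ)| + ⌊def(Λ)²/4⌋; and for every δ ∈ ℤ and m ∈ ℕ, the map Υ induces a bijection from the set of equivalence classes of symbols of defect δ and rank m + ⌊δ²/4⌋ onto the set of bipartitions of m. -/
/-!
List a finite set `A ⊆ ℕ` increasingly as `e 0 < e 1 < ⋯ < e (n-1)`. The parts `e i - i` form a
nondecreasing sequence, and every nondecreasing sequence `q` comes from exactly one set, namely
`{q i + i}`; so `A ↦ {e i - i}` is a bijection from finite subsets of `ℕ` onto multisets on `ℕ`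
preserving cardinality, `Υ` forgets only the zero parts, a `d`-shift adds `d` zero parts, and the
parts sum to `Σ A - n(n-1)/2`. Hence `Υ` and the defect are shift invariant, and two symbols with
the same defect and `Υ` differ by the shift by the difference of their cardinalities. The rank
formula reduces to `⌊(a+b-1)²/4⌋ + ⌊(a-b)²/4⌋ = a(a-1)/2 + b(b-1)/2`: the two squares have
opposite parities and add up to `4 (a(a-1)/2 + b(b-1)/2) + 1`.
-/

open scoped Classical

noncomputable section

/-- A symbol: an ordered pair of finite subsets of ℕ. -/
abbrev LSymbol := Finset ℕ × Finset ℕ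

/-- The `d`-shift of a beta-set. -/
def shiftSet (d : ℕ) (A : Finset ℕ) : Finset ℕ :=
  Finset.range d ∪ A.image (· + d)

/-- The `d`-shift of a symbol. -/
def dShift (d : ℕ) (Λ : LSymbol) : LSymbol := (shiftSet d Λ.1, shiftSet d Λ.2)

/-- Equivalence of symbols: the equivalence relation generated by `d`-shifts. -/
def SymbolEquiv : LSymbol → LSymbol → Prop :=
  Relation.EqvGen fun Λ Λ' => ∃ d : ℕ, Λ' = dShift d Λ

/-- The rank of a symbol:
`rank(Λ) = Σ_{a∈A} a + Σ_{b∈B} b − ⌊((|A|+|B|−1)/2)²⌋`. -/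
def symbolRank (Λ : LSymbol) : ℤ :=
  ((∑ a ∈ Λ.1, a : ℕ) : ℤ) + ((∑ b ∈ Λ.2, b : ℕ) : ℤ) -
    ((Λ.1.card : ℤ) + (Λ.2.card : ℤ) - 1) ^ 2 / 4

/-- The defect of a symbol: `def(Λ) = |A| − |B|`. -/
def symbolDefect (Λ : LSymbol) : ℤ := (Λ.1.card : ℤ) - (Λ.2.card : ℤ)

/-- The partition associated to a beta-set `A = {a₁ > a₂ > ⋯ > a_m}`, namely
`(a₁−(m−1), a₂−(m−2), …, a_m)`, encoded as the multiset of its nonzero parts: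
the element `a ∈ A` contributes the part `a − #{b ∈ A | b < a}`. -/
def betaToPartition (A : Finset ℕ) : Multiset ℕ :=
  (A.val.map fun a => a - (A.filter fun b => b < a).card).filter (· ≠ 0)

/-- The map `Υ` from symbols to bipartitions. -/
def Upsilon (Λ : LSymbol) : Multiset ℕ × Multiset ℕ :=
  (betaToPartition Λ.1, betaToPartition Λ.2)

/-- The weight `|Υ(Λ)| = |μ¹| + |μ²|`. -/
def UpsilonSize (Λ : LSymbol) : ℕ := (Upsilon Λ).1.sum + (Upsilon Λ).2.sum

open Finset

def betaParts (A : Finset ℕ) : Multiset ℕ :=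
  A.val.map fun a => a - #{b ∈ A | b < a}

lemma betaToPartition_eq_filter (A : Finset ℕ) :
    betaToPartition A = (betaParts A).filter (· ≠ 0) := rfl

lemma card_betaParts (A : Finset ℕ) : Multiset.card (betaParts A) = #A :=
  Multiset.card_map _ _

lemma card_filter_lt_le (A : Finset ℕ) (a : ℕ) : #{b ∈ A | b < a} ≤ a :=
  (card_le_card fun _ hb => mem_range.2 (mem_filter.1 hb).2).trans (card_range a).le

lemma card_filter_lt_le_add_sub (A : Finset ℕ) (a b : ℕ) :
    #{x ∈ A | x < b} ≤ #{x ∈ A | x < a} + (b - a) :=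
  calc #{x ∈ A | x < b}
      ≤ #({x ∈ A | x < a} ∪ Ico a b) := card_le_card fun x hx => by
        obtain ⟨hxA, hxb⟩ := mem_filter.1 hx
        rcases lt_or_ge x a with h | h
        exacts [mem_union_left _ (mem_filter.2 ⟨hxA, h⟩), mem_union_right _ (mem_Ico.2 ⟨h, hxb⟩)]
    _ ≤ #{x ∈ A | x < a} + (b - a) := by grw [card_union_le, Nat.card_Ico]

section StrictMono

variable {n : ℕ} {e : Fin n → ℕ}

lemma card_filter_lt_image (he : StrictMono e) (i : Fin n) :
    #{b ∈ univ.image e | b < e i} = i := by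
  simp_rw [filter_image, he.lt_iff_lt, card_image_of_injective _ he.injective, filter_gt_eq_Iio,
    Fin.card_Iio]

lemma val_le_apply_of_strictMono (he : StrictMono e) (i : Fin n) : (i : ℕ) ≤ e i :=
  card_filter_lt_image he i ▸ card_filter_lt_le _ _

lemma add_sub_val_le_apply_of_strictMono (he : StrictMono e) {i j : Fin n} (hij : i ≤ j) :
    e i + ((j : ℕ) - i) ≤ e j := by
  have h := card_filter_lt_le_add_sub (univ.image e) (e i) (e j)
  rw [card_filter_lt_image he, card_filter_lt_image he] at h
  have := he.monotone hij
  omega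

lemma monotone_apply_sub_val_of_strictMono (he : StrictMono e) : Monotone fun i => e i - i :=
  fun i j hij => by
    have := add_sub_val_le_apply_of_strictMono he hij
    have := val_le_apply_of_strictMono he i
    simp only
    omega

lemma betaParts_image (he : StrictMono e) :
    betaParts (univ.image e) = univ.val.map fun i => e i - i := by
  rw [betaParts, image_val_of_injOn he.injective.injOn, Multiset.map_map]
  exact Multiset.map_congr rfl fun i _ => by simp [card_filter_lt_image he]

end StrictMono

lemma sum_betaParts_add_sum_range (A : Finset ℕ) :
    (betaParts A).sum + ∑ i ∈ range #A, i = ∑ a ∈ A, a := by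
  have hranks : ∑ a ∈ A, #{b ∈ A | b < a} = ∑ i ∈ range #A, i := by
    conv_lhs => rw [← A.image_orderEmbOfFin_univ rfl]
    have he := (A.orderEmbOfFin rfl).strictMono
    rw [sum_image he.injective.injOn]
    simp_rw [card_filter_lt_image he]
    exact Fin.sum_univ_eq_sum_range (fun i => i) #A
  rw [← hranks, betaParts, ← sum_eq_multiset_sum, ← sum_add_distrib]
  exact sum_congr rfl fun a _ => tsub_add_cancel_of_le (card_filter_lt_le A a)

def betaSetOfParts (l : List ℕ) : Finset ℕ :=
  univ.image fun i : Fin l.length => l[i] + i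

lemma betaParts_betaSetOfParts {l : List ℕ} (hl : l.Pairwise (· ≤ ·)) :
    betaParts (betaSetOfParts l) = l := by
  have he : StrictMono fun i : Fin l.length => l[i] + i := fun i j hij => by
    have := List.pairwise_iff_getElem.1 hl i j i.2 j.2 hij
    simp only [Fin.getElem_fin]
    omega
  rw [betaSetOfParts, betaParts_image he]
  simp [Fin.univ_val_map]

lemma betaSetOfParts_ofFn {n : ℕ} {e : Fin n → ℕ} (he : StrictMono e) :
    betaSetOfParts (List.ofFn fun i => e i - i) = univ.image e := by
  ext x
  simp only [betaSetOfParts, mem_image, mem_univ, true_and, Fin.getElem_fin, List.getElem_ofFn]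
  constructor
  · rintro ⟨i, rfl⟩
    exact ⟨_, (Nat.sub_add_cancel (val_le_apply_of_strictMono he _)).symm⟩
  · rintro ⟨i, rfl⟩
    exact ⟨⟨i, by simp⟩, Nat.sub_add_cancel (val_le_apply_of_strictMono he _)⟩

lemma betaSetOfParts_sort_betaParts (A : Finset ℕ) :
    betaSetOfParts ((betaParts A).sort (· ≤ ·)) = A := by
  set e := A.orderEmbOfFin rfl
  have he : StrictMono e := e.strictMono
  have hA : univ.image e = A := A.image_orderEmbOfFin_univ rfl
  have hparts : betaParts A = List.ofFn fun i => e i - i := by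
    rw [← Fin.univ_val_map, ← betaParts_image he, hA]
  have hsorted : (List.ofFn fun i => e i - i).Pairwise (· ≤ ·) :=
    List.pairwise_ofFn.2 fun _ _ hij => monotone_apply_sub_val_of_strictMono he hij.le
  rw [hparts, Multiset.coe_sort, List.mergeSort_eq_self _ hsorted, betaSetOfParts_ofFn he, hA]

theorem betaParts_bijective : Function.Bijective betaParts :=
  ⟨fun A B h => by rw [← betaSetOfParts_sort_betaParts A, h, betaSetOfParts_sort_betaParts],
    fun s => ⟨_, by rw [betaParts_betaSetOfParts (s.pairwise_sort _), s.sort_eq]⟩⟩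

lemma Multiset.filter_ne_zero_add_replicate (s : Multiset ℕ) :
    s.filter (· ≠ 0) + replicate (card s - card (s.filter (· ≠ 0))) 0 = s := by
  have hsplit := Multiset.filter_add_not (· ≠ 0) s
  have hcard := congrArg card hsplit
  rw [card_add] at hcard
  conv_rhs => rw [← hsplit]
  congr 1
  exact (Multiset.eq_replicate.2
    ⟨by omega, fun b hb => by simpa using Multiset.of_mem_filter hb⟩).symm

lemma disjoint_range_image_add (d : ℕ) (A : Finset ℕ) : Disjoint (range d) (A.image (· + d)) :=
  disjoint_left.2 fun _ hx hx' => by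
    obtain ⟨a, -, rfl⟩ := mem_image.1 hx'
    exact (Nat.le_add_left d a).not_gt (mem_range.1 hx)

lemma shiftSet_val (d : ℕ) (A : Finset ℕ) :
    (shiftSet d A).val = Multiset.range d + A.val.map (· + d) := by
  rw [shiftSet, ← disjUnion_eq_union _ _ (disjoint_range_image_add d A), disjUnion_val,
    range_val, image_val_of_injOn (add_left_injective d).injOn]

lemma card_filter_lt_shiftSet (d : ℕ) (A : Finset ℕ) (y : ℕ) :
    #{b ∈ shiftSet d A | b < y} = min d y + #{a ∈ A | a + d < y} := by
  rw [shiftSet, filter_union, card_union_of_disjoint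
      ((disjoint_range_image_add d A).mono (filter_subset _ _) (filter_subset _ _)),
    filter_image, card_image_of_injective _ (add_left_injective d)]
  rw [show {b ∈ range d | b < y} = range (min d y) by ext; simp, card_range]

lemma betaParts_shiftSet (d : ℕ) (A : Finset ℕ) :
    betaParts (shiftSet d A) = .replicate d 0 + betaParts A := by
  rw [betaParts, shiftSet_val, Multiset.map_add, Multiset.map_map, betaParts]
  congr 1
  · rw [Multiset.eq_replicate]
    refine ⟨by simp, fun b hb => ?_⟩
    obtain ⟨x, hx, rfl⟩ := Multiset.mem_map.1 hb
    rw [Multiset.mem_range] at hx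
    rw [card_filter_lt_shiftSet]
    omega
  · refine Multiset.map_congr rfl fun a _ => ?_
    simp only [Function.comp_apply, card_filter_lt_shiftSet, add_lt_add_iff_right]
    omega

lemma filter_ne_zero_replicate_zero (d : ℕ) : (Multiset.replicate d 0).filter (· ≠ 0) = 0 :=
  Multiset.filter_eq_nil.2 fun _ h => by simp [Multiset.eq_of_mem_replicate h]

lemma card_shiftSet (d : ℕ) (A : Finset ℕ) : #(shiftSet d A) = d + #A := by
  rw [← card_betaParts, betaParts_shiftSet, Multiset.card_add, Multiset.card_replicate,
    card_betaParts]

lemma betaToPartition_shiftSet (d : ℕ) (A : Finset ℕ) :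
    betaToPartition (shiftSet d A) = betaToPartition A := by
  rw [betaToPartition_eq_filter, betaParts_shiftSet, Multiset.filter_add,
    filter_ne_zero_replicate_zero, zero_add, betaToPartition_eq_filter]

lemma sum_betaToPartition_add_sum_range (A : Finset ℕ) :
    (betaToPartition A).sum + ∑ i ∈ range #A, i = ∑ a ∈ A, a := by
  rw [← sum_betaParts_add_sum_range A, betaToPartition_eq_filter]
  conv_rhs => rw [← Multiset.filter_ne_zero_add_replicate (betaParts A)]
  rw [Multiset.sum_add, Multiset.sum_replicate, smul_zero, add_zero]

lemma eq_of_card_eq_of_betaToPartition_eq {A B : Finset ℕ} (hc : #A = #B)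
    (h : betaToPartition A = betaToPartition B) : A = B := by
  apply betaParts_bijective.1
  rw [← Multiset.filter_ne_zero_add_replicate (betaParts A),
    ← Multiset.filter_ne_zero_add_replicate (betaParts B), card_betaParts, card_betaParts,
    ← betaToPartition_eq_filter, ← betaToPartition_eq_filter, h, hc]

lemma exists_card_eq_betaToPartition_eq {p : Multiset ℕ} (hp : ∀ x ∈ p, 0 < x) {n : ℕ}
    (hn : Multiset.card p ≤ n) : ∃ A : Finset ℕ, #A = n ∧ betaToPartition A = p := by
  obtain ⟨A, hA⟩ := betaParts_bijective.2 (p + .replicate (n - Multiset.card p) 0)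
  refine ⟨A, ?_, ?_⟩
  · rw [← card_betaParts, hA, Multiset.card_add, Multiset.card_replicate]
    omega
  · rw [betaToPartition_eq_filter, hA, Multiset.filter_add, filter_ne_zero_replicate_zero,
      add_zero, Multiset.filter_eq_self.2 fun x hx => (hp x hx).ne']

lemma Int.sq_ediv_four_add_sq_ediv_four {x y : ℤ} (h : Odd (x + y)) :
    x ^ 2 / 4 + y ^ 2 / 4 = (x ^ 2 + y ^ 2) / 4 := by
  obtain ⟨t, ht⟩ := h
  obtain ⟨k, rfl | rfl⟩ := Int.even_or_odd' x
  · obtain rfl : y = 2 * (t - k) + 1 := by omega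
    rw [show (2 * k) ^ 2 = 4 * k ^ 2 by ring,
      show (2 * (t - k) + 1) ^ 2 = 4 * ((t - k) ^ 2 + (t - k)) + 1 by ring]
    omega
  · obtain rfl : y = 2 * (t - k) := by omega
    rw [show (2 * k + 1) ^ 2 = 4 * (k ^ 2 + k) + 1 by ring,
      show (2 * (t - k)) ^ 2 = 4 * (t - k) ^ 2 by ring]
    omega

lemma sum_range_id_mul_two_add_self (n : ℕ) : (∑ i ∈ range n, i) * 2 + n = n * n := by
  rw [sum_range_id_mul_two]
  cases n <;> simp
  ring

theorem symbolRank_eq (Λ : LSymbol) :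
    symbolRank Λ = (UpsilonSize Λ : ℤ) + symbolDefect Λ ^ 2 / 4 := by
  obtain ⟨A, B⟩ := Λ
  have hA : ((betaToPartition A).sum : ℤ) + (∑ i ∈ range #A, i : ℕ) = (∑ a ∈ A, a : ℕ) := by
    exact_mod_cast sum_betaToPartition_add_sum_range A
  have hB : ((betaToPartition B).sum : ℤ) + (∑ i ∈ range #B, i : ℕ) = (∑ b ∈ B, b : ℕ) := by
    exact_mod_cast sum_betaToPartition_add_sum_range B
  have hGA : ((∑ i ∈ range #A, i : ℕ) : ℤ) * 2 + #A = #A * #A := by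
    exact_mod_cast sum_range_id_mul_two_add_self #A
  have hGB : ((∑ i ∈ range #B, i : ℕ) : ℤ) * 2 + #B = #B * #B := by
    exact_mod_cast sum_range_id_mul_two_add_self #B
  have hsq : (#A + #B - 1 : ℤ) ^ 2 + (#A - #B : ℤ) ^ 2
      = 4 * ((∑ i ∈ range #A, i : ℕ) + (∑ i ∈ range #B, i : ℕ) : ℤ) + 1 := by
    linear_combination -2 * hGA - 2 * hGB
  have hfloor : (#A + #B - 1 : ℤ) ^ 2 / 4 + (#A - #B : ℤ) ^ 2 / 4
      = ((∑ i ∈ range #A, i : ℕ) + (∑ i ∈ range #B, i : ℕ) : ℤ) := by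
    rw [Int.sq_ediv_four_add_sq_ediv_four ⟨#A - 1, by ring⟩, hsq]
    omega
  simp only [symbolRank, symbolDefect, UpsilonSize, Upsilon, Nat.cast_add]
  linarith

lemma Upsilon_dShift (d : ℕ) (Λ : LSymbol) : Upsilon (dShift d Λ) = Upsilon Λ := by
  simp only [Upsilon, dShift, betaToPartition_shiftSet]

lemma symbolDefect_dShift (d : ℕ) (Λ : LSymbol) : symbolDefect (dShift d Λ) = symbolDefect Λ := by
  simp only [symbolDefect, dShift, card_shiftSet]
  omega

lemma symbolRank_dShift (d : ℕ) (Λ : LSymbol) : symbolRank (dShift d Λ) = symbolRank Λ := by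
  rw [symbolRank_eq, symbolRank_eq, UpsilonSize, UpsilonSize, Upsilon_dShift, symbolDefect_dShift]

lemma SymbolEquiv.apply_eq_of_dShift_invariant {α : Sort*} {f : LSymbol → α}
    (hf : ∀ d Λ, f (dShift d Λ) = f Λ) {Λ Λ' : LSymbol} (h : SymbolEquiv Λ Λ') : f Λ = f Λ' := by
  refine (Equivalence.eqvGen_iff (r := fun Λ Λ' => f Λ = f Λ') ⟨fun _ => rfl, Eq.symm, Eq.trans⟩).1
    (Relation.EqvGen.mono ?_ _ _ h)
  rintro Λ _ ⟨d, rfl⟩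
  exact (hf d Λ).symm

lemma eq_dShift_of_Upsilon_eq {Λ Λ' : LSymbol} (hd : symbolDefect Λ = symbolDefect Λ')
    (hU : Upsilon Λ = Upsilon Λ') (h : #Λ.1 ≤ #Λ'.1) : Λ' = dShift (#Λ'.1 - #Λ.1) Λ := by
  have hd' : (#Λ.1 : ℤ) - #Λ.2 = #Λ'.1 - #Λ'.2 := hd
  refine Prod.ext (eq_of_card_eq_of_betaToPartition_eq ?_ ?_).symm
    (eq_of_card_eq_of_betaToPartition_eq ?_ ?_).symm
  · rw [dShift, card_shiftSet]
    omega
  · rw [dShift, betaToPartition_shiftSet]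
    exact congrArg Prod.fst hU
  · rw [dShift, card_shiftSet]
    omega
  · rw [dShift, betaToPartition_shiftSet]
    exact congrArg Prod.snd hU

lemma symbolEquiv_of_symbolDefect_eq_of_Upsilon_eq {Λ Λ' : LSymbol}
    (hd : symbolDefect Λ = symbolDefect Λ') (hU : Upsilon Λ = Upsilon Λ') : SymbolEquiv Λ Λ' := by
  rcases le_total #Λ.1 #Λ'.1 with h | h
  · exact .rel _ _ ⟨_, eq_dShift_of_Upsilon_eq hd hU h⟩
  · exact .symm _ _ (.rel _ _ ⟨_, eq_dShift_of_Upsilon_eq hd.symm hU.symm h⟩)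

lemma exists_symbolDefect_eq_Upsilon_eq (δ : ℤ) {p₁ p₂ : Multiset ℕ} (hp₁ : ∀ x ∈ p₁, 0 < x)
    (hp₂ : ∀ x ∈ p₂, 0 < x) : ∃ Λ : LSymbol, symbolDefect Λ = δ ∧ Upsilon Λ = (p₁, p₂) := by
  obtain ⟨A, hA, hpA⟩ := exists_card_eq_betaToPartition_eq hp₁
    (n := Multiset.card p₁ + Multiset.card p₂ + δ.toNat) (by omega)
  obtain ⟨B, hB, hpB⟩ := exists_card_eq_betaToPartition_eq hp₂
    (n := Multiset.card p₁ + Multiset.card p₂ + (-δ).toNat) (by omega)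
  refine ⟨(A, B), ?_, by rw [Upsilon, hpA, hpB]⟩
  simp only [symbolDefect, hA, hB]
  omega

/-- Rank, defect and `Υ` are constant on equivalence classes of symbols;
`rank(Λ) = |Υ(Λ)| + ⌊def(Λ)²/4⌋`; and `Υ` induces a bijection from equivalence classes of
symbols of defect `δ` and rank `m + ⌊δ²/4⌋` onto the bipartitions of `m`. -/
theorem symbol_rank_defect_Upsilon :
    (∀ Λ Λ' : LSymbol, SymbolEquiv Λ Λ' →
      symbolRank Λ = symbolRank Λ' ∧ symbolDefect Λ = symbolDefect Λ' ∧
        Upsilon Λ = Upsilon Λ') ∧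
    (∀ Λ : LSymbol, symbolRank Λ = (UpsilonSize Λ : ℤ) + (symbolDefect Λ) ^ 2 / 4) ∧
    (∀ (δ : ℤ) (m : ℕ),
      (∀ p₁ p₂ : Multiset ℕ, (∀ x ∈ p₁, 0 < x) → (∀ x ∈ p₂, 0 < x) →
        p₁.sum + p₂.sum = m →
        ∃ Λ : LSymbol, symbolDefect Λ = δ ∧ symbolRank Λ = (m : ℤ) + δ ^ 2 / 4 ∧
          Upsilon Λ = (p₁, p₂)) ∧
      (∀ Λ Λ' : LSymbol, symbolDefect Λ = δ → symbolDefect Λ' = δ →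
        symbolRank Λ = (m : ℤ) + δ ^ 2 / 4 → symbolRank Λ' = (m : ℤ) + δ ^ 2 / 4 →
        Upsilon Λ = Upsilon Λ' → SymbolEquiv Λ Λ')) := by
  refine ⟨fun Λ Λ' h => ⟨h.apply_eq_of_dShift_invariant symbolRank_dShift,
    h.apply_eq_of_dShift_invariant symbolDefect_dShift,
    h.apply_eq_of_dShift_invariant Upsilon_dShift⟩, symbolRank_eq, fun δ m => ⟨?_, ?_⟩⟩
  · intro p₁ p₂ hp₁ hp₂ hm
    obtain ⟨Λ, hd, hU⟩ := exists_symbolDefect_eq_Upsilon_eq δ hp₁ hp₂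
    refine ⟨Λ, hd, ?_, hU⟩
    rw [symbolRank_eq, hd, UpsilonSize, hU, ← hm]
  · intro Λ Λ' hd hd' _ _ hU
    exact symbolEquiv_of_symbolDefect_eq_of_Upsilon_eq (hd.trans hd'.symm) hU
end
end
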